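/- arXiv:1909.12052 — 2 statements merged into one kernel-verified Lean document; each statement's English description precedes it below -/
import Mathlib

section
/- Let r ≥ 1 be odd, ω ∈ ℂ an r-th root of unity, and s ≥ 1 an integer with 2^s ≡ 1 (mod r). Then for all integers n ≥ 1, T(2^s·n; ω) = T(2^s; ω)·T(n; ω). -/
/-!
Cutting `[0, 2^s n)` into the blocks `[2^s q, 2^s q + 2^s)`, the binary digits of `2^s q + m`
with `m < 2^s` are those of `m` followed by those of `q`, so `t(2^s q + m) = t(q) t(m)`.
Hence `T(2^s n; z) = T(2^s; z) · T(n; z^{2^s})` for every `z`, and `ω^{2^s} = ω` when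
`2^s ≡ 1 (mod r)`.
-/

open Finset

/-- The Thue–Morse sequence: `t n = (-1)^(binary digit sum of n)`,
so `t 0 = 1`, `t (2n) = t n`, `t (2n+1) = -t n`. -/
def thueMorse (n : ℕ) : ℤ := (-1) ^ (Nat.digits 2 n).sum

/-- Evaluation of the Thue–Morse polynomial: `T(n; z) = ∑_{m=0}^{n-1} t(m) z^m ∈ ℂ`. -/
noncomputable def tmEval (n : ℕ) (z : ℂ) : ℂ :=
  ∑ m ∈ Finset.range n, (thueMorse m : ℂ) * z ^ m

lemma thueMorse_two_mul (n : ℕ) : thueMorse (2 * n) = thueMorse n := by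
  rcases Nat.eq_zero_or_pos n with rfl | hn
  · simp
  · rw [thueMorse, Nat.digits_def' (by norm_num) (by omega)]
    simp [thueMorse]

lemma thueMorse_two_mul_add_one (n : ℕ) : thueMorse (2 * n + 1) = -thueMorse n := by
  rw [thueMorse, Nat.digits_def' (by norm_num) (by omega),
    show (2 * n + 1) % 2 = 1 by omega, show (2 * n + 1) / 2 = n by omega]
  simp [thueMorse, pow_add]

lemma thueMorse_two_pow_mul_add {s m : ℕ} (q : ℕ) (hm : m < 2 ^ s) :
    thueMorse (2 ^ s * q + m) = thueMorse q * thueMorse m := by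
  induction s generalizing m with
  | zero =>
    obtain rfl : m = 0 := by simpa using hm
    simp [thueMorse]
  | succ s ih =>
    obtain ⟨k, rfl | rfl⟩ := Nat.even_or_odd' m
    · rw [show 2 ^ (s + 1) * q + 2 * k = 2 * (2 ^ s * q + k) by ring, thueMorse_two_mul,
        thueMorse_two_mul, ih (by omega)]
    · rw [show 2 ^ (s + 1) * q + (2 * k + 1) = 2 * (2 ^ s * q + k) + 1 by ring,
        thueMorse_two_mul_add_one, thueMorse_two_mul_add_one, ih (by omega), mul_neg]

lemma tmEval_succ (n : ℕ) (z : ℂ) : tmEval (n + 1) z = tmEval n z + thueMorse n * z ^ n :=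
  sum_range_succ _ n

lemma tmEval_two_pow_mul_succ (s n : ℕ) (z : ℂ) :
    tmEval (2 ^ s * (n + 1)) z
      = tmEval (2 ^ s * n) z + tmEval (2 ^ s) z * (thueMorse n * (z ^ 2 ^ s) ^ n) := by
  rw [tmEval, mul_add_one, sum_range_add, tmEval, tmEval, sum_mul]
  congr 1
  refine sum_congr rfl fun m hm => ?_
  rw [thueMorse_two_pow_mul_add n (mem_range.1 hm), pow_add, ← pow_mul]
  push_cast
  ring

theorem tmEval_two_pow_mul_eq (s n : ℕ) (z : ℂ) :
    tmEval (2 ^ s * n) z = tmEval (2 ^ s) z * tmEval n (z ^ 2 ^ s) := by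
  induction n with
  | zero => simp [tmEval]
  | succ n ih => rw [tmEval_two_pow_mul_succ, ih, tmEval_succ, mul_add]

theorem tmEval_two_pow_mul_general (r : ℕ) (ω : ℂ) (hω : ω ^ r = 1)
    (s : ℕ) (hmod : 2 ^ s ≡ 1 [MOD r]) :
    ∀ n : ℕ, 1 ≤ n → tmEval (2 ^ s * n) ω = tmEval (2 ^ s) ω * tmEval n ω := by
  intro n _
  have hω_pow : ω ^ 2 ^ s = ω := by simpa using pow_eq_pow_of_modEq hmod hω
  rw [tmEval_two_pow_mul_eq, hω_pow]

theorem tmEval_two_pow_mul (r : ℕ) (hr : 1 ≤ r) (hodd : Odd r) (ω : ℂ) (hω : ω ^ r = 1)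
    (s : ℕ) (hs : 1 ≤ s) (hmod : 2 ^ s ≡ 1 [MOD r]) :
    ∀ n : ℕ, 1 ≤ n → tmEval (2 ^ s * n) ω = tmEval (2 ^ s) ω * tmEval n ω :=
  tmEval_two_pow_mul_general r ω hω s hmod
end

section
/- Let r₀ > 1 be odd with at least two distinct prime factors, ω a primitive r₀-th root of unity, and s₀ the multiplicative order of 2 modulo r₀. If s₀ is even and 2^{s₀/2} ≡ -1 (mod r₀), then T(2^{s₀}; ω) = ∏_{i=0}^{s₀-1}(1 - ω^{2^i}) is a real number that is not a rational integer. -/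
/-!
Write `s₀ = 2t` and `Q = ∏_{i<t} (1 - ω^{2^i})`. Since `2^t ≡ -1 (mod r₀)`, the last `t` factors of
`T = T(2^{s₀}; ω)` are the conjugates of the first `t`, so `T = Q * conj Q = |Q|²` is real.

The `ω^{2^i}`, `i < s₀`, are distinct primitive `r₀`-th roots of unity, and `r₀` is not a prime
power, so `T` divides `Φ_{r₀}(1) = 1` among algebraic integers; an integer value of `T` must be `1`.
From `conj Q = (-1)^t ω² Q` we then get `(ωQ)² = (-1)^t`. If `t` is even, `ωQ = ±1` is rational,
yet the conjugation `ω ↦ ω²` sends `ωQ` to `-ωQ`. If `t` is odd, `ωQ` is a square root of `-1`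
in `ℚ(ω)`, so `ℚ(ω)` would contain a primitive `4r₀`-th root of unity, whose degree
`φ(4r₀) = 2φ(r₀)` is too large.
-/

open Finset IntermediateField Polynomial

theorem IsPrimitiveRoot.pow_eq_pow_iff_natCast {M : Type*} [CommMonoid M] {ζ : M} {r : ℕ}
    [NeZero r] (hζ : IsPrimitiveRoot ζ r) {a b : ℕ} : ζ ^ a = ζ ^ b ↔ (a : ZMod r) = b := by
  rw [(hζ.isOfFinOrder (NeZero.ne r)).pow_eq_pow_iff_modEq, ← hζ.eq_orderOf,
    ZMod.natCast_eq_natCast_iff]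

theorem IsPrimitiveRoot.pow_mul_self_eq_one_of_natCast_eq_neg_one {M : Type*} [CommMonoid M]
    {ζ : M} {r : ℕ} [NeZero r] (hζ : IsPrimitiveRoot ζ r) {a : ℕ} (ha : (a : ZMod r) = -1) :
    ζ ^ a * ζ = 1 := by
  rw [← pow_succ, ← pow_zero ζ, hζ.pow_eq_pow_iff_natCast, Nat.cast_succ, ha, neg_add_cancel,
    Nat.cast_zero]

section PrimitiveRoots

variable {K : Type*} [CommRing K] [IsDomain K] {r : ℕ} {ω : K}

theorem prod_one_sub_primitiveRoots_eq_one (hr : 2 ≤ r.primeFactors.card)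
    (hω : IsPrimitiveRoot ω r) : ∏ μ ∈ primitiveRoots r K, (1 - μ) = 1 := by
  have hr' : ∀ {p : ℕ}, p.Prime → ∀ k, p ^ k ≠ r := by
    rintro p hp (_ | k) rfl
    · simp at hr
    · simp [Nat.primeFactors_prime_pow k.succ_ne_zero hp] at hr
  simpa [cyclotomic_eq_prod_X_sub_primitiveRoots hω, eval_prod] using
    eval_one_cyclotomic_not_prime_pow (R := K) hr'

theorem exists_isIntegral_mul_prod_one_sub_eq_one (hr : 2 ≤ r.primeFactors.card)
    (hω : IsPrimitiveRoot ω r) {T : Finset K} (hT : T ⊆ primitiveRoots r K) :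
    ∃ x : K, IsIntegral ℤ x ∧ x * ∏ μ ∈ T, (1 - μ) = 1 := by
  classical
  have hr0 : 0 < r := Nat.pos_of_ne_zero (by rintro rfl; simp at hr)
  refine ⟨∏ μ ∈ primitiveRoots r K \ T, (1 - μ), ?_, ?_⟩
  · refine IsIntegral.prod _ fun μ hμ => isIntegral_one.sub ?_
    exact ((mem_primitiveRoots hr0).mp (mem_sdiff.mp hμ).1).isIntegral hr0
  · rw [prod_sdiff hT, prod_one_sub_primitiveRoots_eq_one hr hω]

theorem exists_isIntegral_mul_prod_range_orderOf_eq_one (hr : 2 ≤ r.primeFactors.card)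
    (hω : IsPrimitiveRoot ω r) {a : ℕ} (ha : a.Coprime r) :
    ∃ x : K, IsIntegral ℤ x ∧
      x * ∏ i ∈ range (orderOf (a : ZMod r)), (1 - ω ^ a ^ i) = 1 := by
  have hr0 : 0 < r := Nat.pos_of_ne_zero (by rintro rfl; simp at hr)
  have : NeZero r := ⟨hr0.ne'⟩
  classical
  have hinj : Set.InjOn (fun i => ω ^ a ^ i) (range (orderOf (a : ZMod r))) := by
    intro i hi j hj hij
    refine pow_injOn_Iio_orderOf (by simpa using hi) (by simpa using hj) ?_
    simpa using hω.pow_eq_pow_iff_natCast.mp hij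
  rw [← prod_image (f := fun μ => 1 - μ) hinj]
  refine exists_isIntegral_mul_prod_one_sub_eq_one hr hω fun μ hμ => ?_
  obtain ⟨i, -, rfl⟩ := mem_image.mp hμ
  exact (mem_primitiveRoots hr0).mpr (hω.pow_of_coprime _ (ha.pow_left i))

end PrimitiveRoots

theorem isUnit_of_mul_eq_one_of_isIntegral {K : Type*} [Field K] [CharZero K] {z : ℤ} {x : K}
    (hx : IsIntegral ℤ x) (h : (z : K) * x = 1) : IsUnit z := by
  have hx' : x = algebraMap ℚ K (z : ℚ)⁻¹ := by
    rw [map_inv₀, map_intCast]; exact eq_inv_of_mul_eq_one_right h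
  rw [hx', isIntegral_algebraMap_iff (algebraMap ℚ K).injective] at hx
  obtain ⟨y, hy⟩ := IsIntegrallyClosed.isIntegral_iff.mp hx
  have hz : (z : ℚ) ≠ 0 := by rintro h0; simp [show z = 0 by exact_mod_cast h0] at h
  refine IsUnit.of_mul_eq_one y (Int.cast_injective (α := ℚ) ?_)
  rw [Int.cast_mul, Int.cast_one, ← eq_intCast (algebraMap ℤ ℚ) y, hy, mul_inv_cancel₀ hz]

-- `twoPowProd ω n` is the paper's `T(2^n; ω)`.
def twoPowProd {R : Type*} [CommRing R] (ω : R) (n : ℕ) : R :=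
  ∏ i ∈ range n, (1 - ω ^ 2 ^ i)

section TwoPowProd

variable {R S : Type*} [CommRing R] [CommRing S]

theorem map_twoPowProd {F : Type*} [FunLike F R S] [RingHomClass F R S] (f : F) (ω : R) (n : ℕ) :
    f (twoPowProd ω n) = twoPowProd (f ω) n := by
  simp [twoPowProd, map_prod]

theorem twoPowProd_add (ω : R) (m n : ℕ) :
    twoPowProd ω (m + n) = twoPowProd ω m * twoPowProd (ω ^ 2 ^ m) n := by
  simp only [twoPowProd, prod_range_add, ← pow_mul, ← pow_add]

theorem prod_range_pow_two_pow_mul_self {M : Type*} [CommMonoid M] (ω : M) (n : ℕ) :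
    (∏ i ∈ range n, ω ^ 2 ^ i) * ω = ω ^ 2 ^ n := by
  rw [prod_pow_eq_pow_sum, Nat.geomSum_eq le_rfl, Nat.div_one, ← pow_succ,
    Nat.sub_add_cancel Nat.one_le_two_pow]

variable {K : Type*} [Field K] {ω : K} {t : ℕ}

theorem twoPowProd_inv (ht : ω ^ 2 ^ t * ω = 1) :
    twoPowProd ω⁻¹ t = (-1) ^ t * ω ^ 2 * twoPowProd ω t := by
  have hω : ω ≠ 0 := right_ne_zero_of_mul_eq_one ht
  have hprod : (∏ i ∈ range t, ω ^ 2 ^ i)⁻¹ = ω ^ 2 := inv_eq_of_mul_eq_one_right <| by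
    rw [sq, ← mul_assoc, prod_range_pow_two_pow_mul_self, ht]
  have hfactor : ∀ i ∈ range t, 1 - ω⁻¹ ^ 2 ^ i = -1 * (ω ^ 2 ^ i)⁻¹ * (1 - ω ^ 2 ^ i) := by
    intro i _
    rw [inv_pow]
    field_simp
    ring
  rw [twoPowProd, prod_congr rfl hfactor, prod_mul_distrib, prod_mul_distrib, prod_const,
    card_range, prod_inv_distrib, hprod, twoPowProd]

theorem sq_mul_twoPowProd_sq (hω : ω ≠ 1) (ht : ω ^ 2 ^ t * ω = 1) :
    ω ^ 2 * twoPowProd (ω ^ 2) t = -(ω * twoPowProd ω t) := by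
  have hsub : 1 - ω ≠ 0 := sub_ne_zero.mpr hω.symm
  have htel : (1 - ω) * twoPowProd (ω ^ 2) t = twoPowProd ω t * (1 - ω ^ 2 ^ t) := by
    have h := twoPowProd_add ω 1 t
    rw [add_comm, twoPowProd, prod_range_succ, ← twoPowProd] at h
    simpa [twoPowProd] using h.symm
  refine mul_left_cancel₀ hsub ?_
  linear_combination ω ^ 2 * htel - ω * twoPowProd ω t * ht

variable {ω : ℂ} {t : ℕ}

theorem twoPowProd_add_self (hω : ‖ω‖ = 1) (ht : ω ^ 2 ^ t * ω = 1) :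
    twoPowProd ω (t + t) = Complex.normSq (twoPowProd ω t) := by
  rw [twoPowProd_add, eq_inv_of_mul_eq_one_left ht, Complex.inv_eq_conj hω, ← map_twoPowProd,
    Complex.mul_conj]

theorem mul_twoPowProd_sq (hω : ‖ω‖ = 1) (ht : ω ^ 2 ^ t * ω = 1) :
    (ω * twoPowProd ω t) ^ 2 = (-1) ^ t * Complex.normSq (twoPowProd ω t) := by
  rw [← Complex.mul_conj, map_twoPowProd, ← Complex.inv_eq_conj hω, twoPowProd_inv ht]
  have h : ((-1 : ℂ) ^ t) ^ 2 = 1 := by rw [← pow_mul, pow_mul', neg_one_sq, one_pow]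
  linear_combination (ω * twoPowProd ω t) ^ 2 * (-h)

end TwoPowProd

section Galois

variable {K : Type*} [Field K] [CharZero K] {r : ℕ}

theorem IsPrimitiveRoot.aeval_eq_of_aeval_eq_ratCast {ζ ζ' : K} (hζ : IsPrimitiveRoot ζ r)
    (hζ' : IsPrimitiveRoot ζ' r) (hr : 0 < r) {p : ℚ[X]} {c : ℚ} (h : aeval ζ p = c) :
    aeval ζ' p = c := by
  have hmin : minpoly ℚ ζ = minpoly ℚ ζ' := by
    rw [← cyclotomic_eq_minpoly_rat hζ hr, cyclotomic_eq_minpoly_rat hζ' hr]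
  obtain ⟨q, hq⟩ := minpoly.dvd ℚ ζ (p := p - C c) (by simp [h])
  have h' : aeval ζ' (p - C c) = 0 := by rw [hq, map_mul, hmin, minpoly.aeval, zero_mul]
  simpa [sub_eq_zero] using h'

theorem IsPrimitiveRoot.sq_ne_neg_one_of_mem_adjoin {ζ x : K} (hζ : IsPrimitiveRoot ζ r)
    (hr : Odd r) (hx : x ∈ ℚ⟮ζ⟯) : x ^ 2 ≠ -1 := by
  intro hx2
  have hr0 : 0 < r := hr.pos
  have hx4 : orderOf x = 2 ^ 2 := by
    have : Fact (Nat.Prime 2) := ⟨Nat.prime_two⟩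
    refine orderOf_eq_prime_pow (by norm_num [hx2]) ?_
    rw [pow_succ, pow_mul, pow_one, hx2, neg_one_sq]
  have hcop : r.Coprime (2 ^ 2) := (Nat.coprime_two_right.mpr hr).pow_right 2
  have hζx : IsPrimitiveRoot (ζ * x) (r * 2 ^ 2) := by
    rw [IsPrimitiveRoot.iff_orderOf, (Commute.all ζ x).orderOf_mul_eq_mul_orderOf_of_coprime
      (by rwa [← hζ.eq_orderOf, hx4]), ← hζ.eq_orderOf, hx4]
  have hle : ℚ⟮ζ * x⟯ ≤ ℚ⟮ζ⟯ := adjoin_simple_le_iff.mpr (mul_mem (mem_adjoin_simple_self ℚ ζ) hx)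
  have hint := (hζ.isIntegral hr0).tower_top (A := ℚ)
  have : FiniteDimensional ℚ ℚ⟮ζ⟯ := adjoin.finiteDimensional hint
  have hdeg := finrank_le_of_le_right hle
  rw [adjoin.finrank hint, adjoin.finrank ((hζx.isIntegral (by positivity)).tower_top (A := ℚ)),
    ← cyclotomic_eq_minpoly_rat hζ hr0, ← cyclotomic_eq_minpoly_rat hζx (by positivity),
    natDegree_cyclotomic, natDegree_cyclotomic, Nat.totient_mul hcop,
    Nat.totient_prime_pow Nat.prime_two two_pos] at hdeg
  have := Nat.totient_pos.mpr hr0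
  omega

theorem mul_twoPowProd_sq_ne_one {ω : K} (hω : IsPrimitiveRoot ω r) (hr : 1 < r)
    (h2 : Nat.Coprime 2 r) {t : ℕ} (ht : ω ^ 2 ^ t * ω = 1) : (ω * twoPowProd ω t) ^ 2 ≠ 1 := by
  intro h
  obtain ⟨c, hc, hωc⟩ : ∃ c : ℚ, c ≠ 0 ∧ ω * twoPowProd ω t = c := by
    rcases sq_eq_one_iff.mp h with h | h
    exacts [⟨1, one_ne_zero, by simpa using h⟩, ⟨-1, by norm_num, by simpa using h⟩]
  -- the conjugation `ω ↦ ω ^ 2` fixes the rational number `c` but negates `ω * twoPowProd ω t`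
  have h' := hω.aeval_eq_of_aeval_eq_ratCast (hω.pow_of_coprime 2 h2) (by omega)
    (p := X * twoPowProd X t) (by simpa [map_twoPowProd] using hωc)
  simp only [map_mul, aeval_X, map_twoPowProd] at h'
  rw [sq_mul_twoPowProd_sq (hω.ne_one hr) ht, hωc, neg_eq_iff_add_eq_zero, ← two_mul] at h'
  exact hc (by exact_mod_cast (mul_eq_zero.mp h').resolve_left two_ne_zero)

theorem mul_twoPowProd_sq_ne_neg_one {ω : K} (hω : IsPrimitiveRoot ω r) (hr : Odd r) (t : ℕ) :
    (ω * twoPowProd ω t) ^ 2 ≠ -1 := by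
  have hω' := mem_adjoin_simple_self ℚ ω
  refine hω.sq_ne_neg_one_of_mem_adjoin hr (mul_mem hω' (prod_mem fun i _ => ?_))
  exact sub_mem (one_mem _) (pow_mem hω' _)

end Galois

theorem tmProd_real_not_int (r₀ : ℕ) (hr₀ : 1 < r₀) (hodd : Odd r₀)
    (hfac : 2 ≤ r₀.primeFactors.card) (ω : ℂ) (hω : IsPrimitiveRoot ω r₀)
    (s₀ : ℕ) (hs₀ : s₀ = orderOf (2 : ZMod r₀))
    (heven : Even s₀) (hneg : (2 : ZMod r₀) ^ (s₀ / 2) = -1) :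
    (∏ i ∈ Finset.range s₀, (1 - ω ^ (2 ^ i))).im = 0 ∧
      ¬∃ z : ℤ, ∏ i ∈ Finset.range s₀, (1 - ω ^ (2 ^ i)) = (z : ℂ) := by
  obtain ⟨t, rfl⟩ := heven
  rw [show (t + t) / 2 = t by omega] at hneg
  have : NeZero r₀ := ⟨by omega⟩
  have h2 : Nat.Coprime 2 r₀ := Nat.coprime_two_left.mpr hodd
  have hnorm : ‖ω‖ = 1 := Complex.norm_eq_one_of_pow_eq_one hω.pow_eq_one (NeZero.ne r₀)
  have ht : ω ^ 2 ^ t * ω = 1 :=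
    hω.pow_mul_self_eq_one_of_natCast_eq_neg_one (by rw [Nat.cast_pow, Nat.cast_ofNat, hneg])
  have hP : twoPowProd ω (t + t) = Complex.normSq (twoPowProd ω t) := twoPowProd_add_self hnorm ht
  refine ⟨by rw [← twoPowProd, hP, Complex.ofReal_im], ?_⟩
  rintro ⟨z, hz⟩
  rw [← twoPowProd, hP] at hz
  have hz1 : z = 1 := by
    obtain ⟨x, hx, hxP⟩ := exists_isIntegral_mul_prod_range_orderOf_eq_one hfac hω h2
    rw [Nat.cast_ofNat, ← hs₀, ← twoPowProd, hP, hz, mul_comm] at hxP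
    have hz0 : (0 : ℝ) ≤ z := by
      rw [← Complex.ofReal_intCast, Complex.ofReal_inj] at hz
      exact hz ▸ Complex.normSq_nonneg _
    rcases Int.isUnit_iff.mp (isUnit_of_mul_eq_one_of_isIntegral hx hxP) with h | h
    · exact h
    · norm_num [h] at hz0
  have hR : (ω * twoPowProd ω t) ^ 2 = (-1) ^ t := by
    rw [mul_twoPowProd_sq hnorm ht, hz, hz1, Int.cast_one, mul_one]
  rcases t.even_or_odd with he | ho
  · exact mul_twoPowProd_sq_ne_one hω hr₀ h2 ht (by rwa [he.neg_one_pow] at hR)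
  · exact mul_twoPowProd_sq_ne_neg_one hω hodd t (by rwa [ho.neg_one_pow] at hR)
end
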